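/- arXiv:1704.04412 — 6 statements merged into one kernel-verified Lean document; each statement's English description precedes it below -/
import Mathlib

section
/- Bäcklund transformation of the Z_n-Sine-Gordon equation (matrix form). Let n ≥ 1, let Γ be the n×n lower shift matrix over ℂ, let a be a nonzero real number, and let u_k, u'_k : ℝ×ℝ → ℝ (0 ≤ k ≤ n−1) be smooth functions. Define the Z_n-valued matrix functions U(x,t) = Σ_{k=0}^{n−1} u_k(x,t) Γ^k and U'(x,t) = Σ_{k=0}^{n−1} u'_k(x,t) Γ^k. Suppose that ∂_x((U'+U)/2) = a · sin((U'−U)/2) and ∂_t((U'−U)/2) = (1/a) · sin((U'+U)/2) hold everywhere, and that U solves the Z_n-Sine-Gordon equation ∂_t∂_x U = sin U. Then U' also solves the Z_n-Sine-Gordon equation ∂_t∂_x U' = sin U'. -/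
/-!
Put `A = (U' + U)/2` and `B = (U' - U)/2`, so that `U' = A + B` and `U = A - B`. The first
Bäcklund equation gives `∂ₓU' = 2a sin B - ∂ₓU`. Since `Z_n` is commutative, the chain rule
`∂ₜ sin B = cos B · ∂ₜB` holds, and the second Bäcklund equation turns it into `a⁻¹ cos B sin A`.
Hence `∂ₜ∂ₓU' = 2 cos B sin A - sin (A - B) = sin (A + B) = sin U'`.
-/

/-- Matrix sine: `sin M = (exp(iM) − exp(−iM))/(2i)`. -/
noncomputable def matSin {n : ℕ} (M : Matrix (Fin n) (Fin n) ℂ) : Matrix (Fin n) (Fin n) ℂ :=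
  (2 * Complex.I)⁻¹ • (NormedSpace.exp (Complex.I • M) - NormedSpace.exp ((-Complex.I) • M))

/-- The `n×n` lower shift matrix `Γ`, with `Γ i j = 1` iff `i = j + 1`. -/
def lowerShift (n : ℕ) : Matrix (Fin n) (Fin n) ℂ :=
  Matrix.of fun i j => if (i : ℕ) = (j : ℕ) + 1 then 1 else 0

open NormedSpace Function

theorem hasDerivAt_exp_of_commute {𝔸 : Type*} [NormedRing 𝔸] [NormedAlgebra ℝ 𝔸]
    [CompleteSpace 𝔸] {F : ℝ → 𝔸} {F' : 𝔸} {s₀ : ℝ} (hF : HasDerivAt F F' s₀)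
    (hc : ∀ s, Commute (F s₀) (F s)) :
    HasDerivAt (fun s => exp (F s)) (exp (F s₀) * F') s₀ := by
  have hr := expSeries_radius_eq_top ℝ 𝔸
  have hsplit : (fun s => exp (F s)) = fun s => exp (F s₀) * exp (F s - F s₀) := by
    funext s
    rw [← exp_add_of_commute_of_mem_ball (𝕂 := ℝ) ((hc s).sub_right (Commute.refl _))
      (by simp [hr]) (by simp [hr]), add_sub_cancel]
  have hshift : HasDerivAt (fun s => exp (F s - F s₀)) F' s₀ := by
    have h := (hasFDerivAt_exp_zero (𝕂 := ℝ) (𝔸 := 𝔸)).comp_hasDerivAt_of_eq s₀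
      (hF.sub_const (F s₀)) (sub_self _).symm
    rwa [one_apply_eq_self] at h
  rw [hsplit]
  exact hshift.const_mul _

/- The `L^∞` operator norm makes square matrices a Banach algebra whose topology is the product
topology. -/
open scoped Matrix.Norms.Operator in
theorem hasDerivAt_matrix_iff {m : Type*} [Fintype m] [DecidableEq m]
    {F : ℝ → Matrix m m ℂ} {F' : Matrix m m ℂ} {s₀ : ℝ} :
    HasDerivAt F F' s₀ ↔ ∀ i j, HasDerivAt (fun s => F s i j) (F' i j) s₀ :=
  hasDerivAt_pi.trans <| forall_congr' fun _ => hasDerivAt_pi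

noncomputable def matCos {n : ℕ} (M : Matrix (Fin n) (Fin n) ℂ) : Matrix (Fin n) (Fin n) ℂ :=
  (2 : ℂ)⁻¹ • (exp (Complex.I • M) + exp ((-Complex.I) • M))

open scoped Matrix.Norms.Operator in
theorem hasDerivAt_matSin_apply_of_commute {n : ℕ} {F : ℝ → Matrix (Fin n) (Fin n) ℂ}
    {F' : Matrix (Fin n) (Fin n) ℂ} {s₀ : ℝ}
    (hF : ∀ i j, HasDerivAt (fun s => F s i j) (F' i j) s₀) (hc : ∀ s, Commute (F s₀) (F s))
    (i j : Fin n) :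
    HasDerivAt (fun s => matSin (F s) i j) ((matCos (F s₀) * F') i j) s₀ := by
  have hexp (z : ℂ) : HasDerivAt (fun s => exp (z • F s)) (exp (z • F s₀) * (z • F')) s₀ :=
    hasDerivAt_exp_of_commute ((hasDerivAt_matrix_iff.2 hF).const_smul z)
      fun s => ((hc s).smul_left z).smul_right z
  have hsin : HasDerivAt (fun s => matSin (F s))
      ((2 * Complex.I)⁻¹ • (exp (Complex.I • F s₀) * (Complex.I • F')
        - exp (-Complex.I • F s₀) * (-Complex.I • F'))) s₀ :=
    ((hexp Complex.I).sub (hexp (-Complex.I))).const_smul (2 * Complex.I)⁻¹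
  have hcos : (2 * Complex.I)⁻¹ • (exp (Complex.I • F s₀) * (Complex.I • F')
        - exp (-Complex.I • F s₀) * (-Complex.I • F')) = matCos (F s₀) * F' := by
    rw [matCos, Matrix.smul_mul, add_mul, mul_smul_comm, mul_smul_comm]
    match_scalars <;> field_simp
  rw [hcos] at hsin
  exact hasDerivAt_matrix_iff.1 hsin i j

theorem matSin_add_add_matSin_sub {n : ℕ} {A B : Matrix (Fin n) (Fin n) ℂ} (h : Commute A B) :
    matSin (A + B) + matSin (A - B) = (2 : ℂ) • (matCos B * matSin A) := by
  have hexp (z w : ℂ) : exp (z • A + w • B) = exp (z • A) * exp (w • B) :=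
    Matrix.exp_add_of_commute _ _ ((h.smul_left z).smul_right w)
  have hcomm (z w : ℂ) : exp (w • B) * exp (z • A) = exp (z • A) * exp (w • B) :=
    ((h.smul_left z).smul_right w).symm.exp.eq
  rw [matSin, matSin, matSin, matCos,
    show Complex.I • (A + B) = Complex.I • A + Complex.I • B by module,
    show -Complex.I • (A + B) = -Complex.I • A + -Complex.I • B by module,
    show Complex.I • (A - B) = Complex.I • A + -Complex.I • B by module,
    show -Complex.I • (A - B) = -Complex.I • A + Complex.I • B by module,
    hexp, hexp, hexp, hexp, Matrix.smul_mul, mul_smul_comm, add_mul, mul_sub, mul_sub,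
    hcomm, hcomm, hcomm, hcomm]
  module

section PartialDerivatives

variable {E : Type*} [NormedAddCommGroup E] [NormedSpace ℝ E] {g : ℝ → ℝ → E}

theorem ContDiff.differentiableAt_curry_left (hg : ContDiff ℝ 1 (uncurry g)) (x t : ℝ) :
    DifferentiableAt ℝ (fun x' => g x' t) x :=
  DifferentiableAt.comp (g := uncurry g) x (hg.differentiable one_ne_zero _)
    (differentiableAt_id.prodMk (differentiableAt_const t))

theorem ContDiff.differentiableAt_curry_right (hg : ContDiff ℝ 1 (uncurry g)) (x t : ℝ) :
    DifferentiableAt ℝ (fun t' => g x t') t :=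
  DifferentiableAt.comp (g := uncurry g) t (hg.differentiable one_ne_zero _)
    ((differentiableAt_const x).prodMk differentiableAt_id)

theorem ContDiff.differentiableAt_deriv_curry_left (hg : ContDiff ℝ 2 (uncurry g)) (x t : ℝ) :
    DifferentiableAt ℝ (fun t' => deriv (fun x' => g x' t') x) t :=
  ((hg.comp (contDiff_snd.prodMk contDiff_fst)).fderiv_apply (f := fun t' x' => g x' t')
    contDiff_const contDiff_const (by norm_num)).differentiable one_ne_zero t

end PartialDerivatives

theorem contDiff_uncurry_apply_of_eq_sum {N : WithTop ℕ∞} {m : Type*} {u : ℕ → ℝ → ℝ → ℝ}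
    {U : ℝ → ℝ → Matrix m m ℂ} {M : ℕ → Matrix m m ℂ} {s : Finset ℕ}
    (hu : ∀ k, ContDiff ℝ N (uncurry (u k))) (hU : ∀ x t, U x t = ∑ k ∈ s, (u k x t : ℂ) • M k)
    (i j : m) : ContDiff ℝ N (uncurry fun x t => U x t i j) := by
  have hentry : (uncurry fun x t => U x t i j) = fun p => ∑ k ∈ s, (u k p.1 p.2 : ℂ) * M k i j := by
    funext p
    simp only [uncurry, hU, Matrix.sum_apply, Matrix.smul_apply, smul_eq_mul]
  rw [hentry]
  exact ContDiff.sum fun k _ => (Complex.ofRealCLM.contDiff.comp (hu k)).mul contDiff_const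

def Zn (n : ℕ) : Subalgebra ℂ (Matrix (Fin n) (Fin n) ℂ) :=
  Algebra.adjoin ℂ {lowerShift n}

theorem sum_smul_pow_mem_adjoin_singleton {R A : Type*} [CommSemiring R] [Semiring A]
    [Algebra R A] (a : A) (s : Finset ℕ) (c : ℕ → R) :
    ∑ k ∈ s, c k • a ^ k ∈ Algebra.adjoin R {a} :=
  Subalgebra.sum_mem _ fun k _ =>
    Subalgebra.smul_mem _ (Subalgebra.pow_mem _ (Algebra.self_mem_adjoin_singleton R a) k) _

theorem Zn.commute {n : ℕ} {M N : Matrix (Fin n) (Fin n) ℂ} (hM : M ∈ Zn n) (hN : N ∈ Zn n) :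
    Commute M N :=
  Algebra.commute_of_mem_adjoin_singleton_of_commute hN
    (Algebra.commute_of_mem_adjoin_self hM).symm

theorem sineGordon_of_backlund {n : ℕ} {a : ℂ} (ha : a ≠ 0)
    {U U' A B : ℝ → ℝ → Matrix (Fin n) (Fin n) ℂ}
    (hU' : ∀ x t, U' x t = A x t + B x t) (hU : ∀ x t, U x t = A x t - B x t)
    (hAB : ∀ x t, Commute (A x t) (B x t)) (hBB : ∀ x t s, Commute (B x t) (B x s))
    (hAx : ∀ x t i j, DifferentiableAt ℝ (fun x' => A x' t i j) x)
    (hBt : ∀ x t i j, DifferentiableAt ℝ (fun t' => B x t' i j) t)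
    (hUx : ∀ x t i j, DifferentiableAt ℝ (fun x' => U x' t i j) x)
    (hUxt : ∀ x t i j, DifferentiableAt ℝ (fun t' => deriv (fun x' => U x' t' i j) x) t)
    (hBackx : ∀ x t i j, deriv (fun x' => A x' t i j) x = (a • matSin (B x t)) i j)
    (hBackt : ∀ x t i j, deriv (fun t' => B x t' i j) t = (a⁻¹ • matSin (A x t)) i j)
    (hSG : ∀ x t i j, deriv (fun t' => deriv (fun x' => U x' t' i j) x) t = matSin (U x t) i j) :
    ∀ x t i j, deriv (fun t' => deriv (fun x' => U' x' t' i j) x) t = matSin (U' x t) i j := by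
  intro x t i j
  have hdx (t' : ℝ) : deriv (fun x' => U' x' t' i j) x
      = 2 * (a * matSin (B x t') i j) - deriv (fun x' => U x' t' i j) x := by
    have hsplit : (fun x' => U' x' t' i j) = fun x' => 2 * A x' t' i j - U x' t' i j := by
      funext x'
      simp only [hU', hU, Matrix.add_apply, Matrix.sub_apply]
      ring
    rw [hsplit]
    refine (((hAx x t' i j).hasDerivAt.const_mul 2).fun_sub
      (hUx x t' i j).hasDerivAt).deriv.trans ?_
    rw [hBackx, Matrix.smul_apply, smul_eq_mul]
  have hsinB : HasDerivAt (fun t' => matSin (B x t') i j)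
      ((matCos (B x t) * (a⁻¹ • matSin (A x t))) i j) t :=
    hasDerivAt_matSin_apply_of_commute (fun i' j' => hBackt x t i' j' ▸ (hBt x t i' j').hasDerivAt)
      (hBB x t) i j
  have hdxt : HasDerivAt (fun t' => deriv (fun x' => U x' t' i j) x) (matSin (U x t) i j) t :=
    hSG x t i j ▸ (hUxt x t i j).hasDerivAt
  rw [funext hdx]
  refine (((hsinB.const_mul a).const_mul 2).fun_sub hdxt).deriv.trans ?_
  rw [hU', hU, eq_sub_of_add_eq (matSin_add_add_matSin_sub (hAB x t))]
  simp only [Matrix.sub_apply, Matrix.smul_apply, Matrix.mul_smul, smul_eq_mul]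
  field_simp

theorem Zn_sineGordon_backlund_general (n : ℕ) (a : ℝ) (ha : a ≠ 0)
    (u u' : ℕ → ℝ → ℝ → ℝ)
    (hu : ∀ k, ContDiff ℝ (⊤ : ℕ∞) fun p : ℝ × ℝ => u k p.1 p.2)
    (hu' : ∀ k, ContDiff ℝ (⊤ : ℕ∞) fun p : ℝ × ℝ => u' k p.1 p.2)
    (U U' : ℝ → ℝ → Matrix (Fin n) (Fin n) ℂ)
    (hU : ∀ x t, U x t = ∑ k ∈ Finset.range n, (u k x t : ℂ) • lowerShift n ^ k)
    (hU' : ∀ x t, U' x t = ∑ k ∈ Finset.range n, (u' k x t : ℂ) • lowerShift n ^ k)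
    (hBx : ∀ (x t : ℝ) (i j : Fin n),
      deriv (fun x' => ((2 : ℂ)⁻¹ • (U' x' t + U x' t)) i j) x
        = ((a : ℂ) • matSin ((2 : ℂ)⁻¹ • (U' x t - U x t))) i j)
    (hBt : ∀ (x t : ℝ) (i j : Fin n),
      deriv (fun t' => ((2 : ℂ)⁻¹ • (U' x t' - U x t')) i j) t
        = ((a : ℂ)⁻¹ • matSin ((2 : ℂ)⁻¹ • (U' x t + U x t))) i j)
    (hSG : ∀ (x t : ℝ) (i j : Fin n),
      deriv (fun t' => deriv (fun x' => U x' t' i j) x) t = matSin (U x t) i j) :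
    ∀ (x t : ℝ) (i j : Fin n),
      deriv (fun t' => deriv (fun x' => U' x' t' i j) x) t = matSin (U' x t) i j := by
  have h2 : (2 : WithTop ℕ∞) ≤ (⊤ : ℕ∞) := WithTop.coe_le_coe.2 le_top
  have hUs := contDiff_uncurry_apply_of_eq_sum (fun k => (hu k).of_le h2) hU
  have hU's := contDiff_uncurry_apply_of_eq_sum (fun k => (hu' k).of_le h2) hU'
  have hAs (i j : Fin n) :
      ContDiff ℝ 1 (uncurry fun x t => ((2 : ℂ)⁻¹ • (U' x t + U x t)) i j) :=
    (contDiff_const.mul ((hU's i j).add (hUs i j))).of_le one_le_two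
  have hBs (i j : Fin n) :
      ContDiff ℝ 1 (uncurry fun x t => ((2 : ℂ)⁻¹ • (U' x t - U x t)) i j) :=
    (contDiff_const.mul ((hU's i j).sub (hUs i j))).of_le one_le_two
  have hUmem (x t : ℝ) : U x t ∈ Zn n := hU x t ▸ sum_smul_pow_mem_adjoin_singleton _ _ _
  have hU'mem (x t : ℝ) : U' x t ∈ Zn n := hU' x t ▸ sum_smul_pow_mem_adjoin_singleton _ _ _
  have hAmem (x t : ℝ) : (2 : ℂ)⁻¹ • (U' x t + U x t) ∈ Zn n :=
    Subalgebra.smul_mem _ (add_mem (hU'mem x t) (hUmem x t)) _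
  have hBmem (x t : ℝ) : (2 : ℂ)⁻¹ • (U' x t - U x t) ∈ Zn n :=
    Subalgebra.smul_mem _ (sub_mem (hU'mem x t) (hUmem x t)) _
  exact sineGordon_of_backlund (A := fun x t => (2 : ℂ)⁻¹ • (U' x t + U x t))
    (B := fun x t => (2 : ℂ)⁻¹ • (U' x t - U x t)) (Complex.ofReal_ne_zero.2 ha)
    (fun _ _ => by module) (fun _ _ => by module) (fun x t => Zn.commute (hAmem x t) (hBmem x t))
    (fun x t s => Zn.commute (hBmem x t) (hBmem x s))
    (fun x t i j => (hAs i j).differentiableAt_curry_left x t)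
    (fun x t i j => (hBs i j).differentiableAt_curry_right x t)
    (fun x t i j => ((hUs i j).of_le one_le_two).differentiableAt_curry_left x t)
    (fun x t i j => (hUs i j).differentiableAt_deriv_curry_left x t) hBx hBt hSG

/-- Bäcklund transformation of the `Z_n`-Sine-Gordon equation (matrix form).
If `∂_x((U'+U)/2) = a·sin((U'−U)/2)`, `∂_t((U'−U)/2) = (1/a)·sin((U'+U)/2)` (entrywise),
and `U` solves `∂_t∂_x U = sin U`, then `U'` solves `∂_t∂_x U' = sin U'`. -/
theorem Zn_sineGordon_backlund (n : ℕ) (hn : 1 ≤ n) (a : ℝ) (ha : a ≠ 0)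
    (u u' : ℕ → ℝ → ℝ → ℝ)
    (hu : ∀ k, ContDiff ℝ (⊤ : ℕ∞) fun p : ℝ × ℝ => u k p.1 p.2)
    (hu' : ∀ k, ContDiff ℝ (⊤ : ℕ∞) fun p : ℝ × ℝ => u' k p.1 p.2)
    (U U' : ℝ → ℝ → Matrix (Fin n) (Fin n) ℂ)
    (hU : ∀ x t, U x t = ∑ k ∈ Finset.range n, (u k x t : ℂ) • lowerShift n ^ k)
    (hU' : ∀ x t, U' x t = ∑ k ∈ Finset.range n, (u' k x t : ℂ) • lowerShift n ^ k)
    (hBx : ∀ (x t : ℝ) (i j : Fin n),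
      deriv (fun x' => ((2 : ℂ)⁻¹ • (U' x' t + U x' t)) i j) x
        = ((a : ℂ) • matSin ((2 : ℂ)⁻¹ • (U' x t - U x t))) i j)
    (hBt : ∀ (x t : ℝ) (i j : Fin n),
      deriv (fun t' => ((2 : ℂ)⁻¹ • (U' x t' - U x t')) i j) t
        = ((a : ℂ)⁻¹ • matSin ((2 : ℂ)⁻¹ • (U' x t + U x t))) i j)
    (hSG : ∀ (x t : ℝ) (i j : Fin n),
      deriv (fun t' => deriv (fun x' => U x' t' i j) x) t = matSin (U x t) i j) :
    ∀ (x t : ℝ) (i j : Fin n),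
      deriv (fun t' => deriv (fun x' => U' x' t' i j) x) t = matSin (U' x t) i j :=
  Zn_sineGordon_backlund_general n a ha u u' hu hu' U U' hU hU' hBx hBt hSG
end

section
/- Let a be a nonzero real number and c a real constant. Define u₀(x,t) = 4 arctan(exp(a x + t/a)) and u₁(x,t) = 2c · exp(a x + t/a)/(exp(2a x + 2t/a) + 1). Then (u₀, u₁) is a solution of the Z₂-Sine-Gordon equation: ∂_t∂_x u₀ = sin u₀ and ∂_t∂_x u₁ = u₁ cos u₀ for all (x,t) ∈ ℝ². -/
/-!
Both profiles are functions of `s = a x + t / a` alone, and for such a function the factors `a`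
and `1 / a` produced by `∂_x` and `∂_t` cancel, so `∂_t∂_x` becomes `d²/ds²`. The kink
`F s = 4 arctan (exp s)` has `F' = 2 / cosh s` and `F'' = sin F`, while `u₁ = (c / 2) F'`;
differentiating `F'' = sin F` once more gives `(F')'' = F' cos F`.
-/

open Real

theorem deriv_comp_mul_left_add_const (f : ℝ → ℝ) (c b x : ℝ) :
    deriv (fun y => f (c * y + b)) x = c * deriv f (c * x + b) := by
  rw [← deriv_comp_add_const]
  exact deriv_comp_mul_left c (fun y => f (y + b)) x

theorem deriv_deriv_comp_mul_add_div (f : ℝ → ℝ) {a : ℝ} (ha : a ≠ 0) (x t : ℝ) :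
    deriv (fun t' => deriv (fun x' => f (a * x' + t' / a)) x) t
      = deriv (deriv f) (a * x + t / a) := by
  have h (t' : ℝ) : a * x + t' / a = a⁻¹ * t' + a * x := by ring
  simp only [deriv_comp_mul_left_add_const, h, deriv_const_mul_field']
  field_simp

theorem Real.sin_two_mul_arctan (y : ℝ) : sin (2 * arctan y) = 2 * y / (1 + y ^ 2) := by
  have h : √(1 + y ^ 2) ^ 2 = 1 + y ^ 2 := sq_sqrt (by positivity)
  rw [sin_two_mul, sin_arctan, cos_arctan]
  field_simp
  rw [h]

theorem Real.cos_two_mul_arctan (y : ℝ) : cos (2 * arctan y) = (1 - y ^ 2) / (1 + y ^ 2) := by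
  have h : √(1 + y ^ 2) ^ 2 = 1 + y ^ 2 := sq_sqrt (by positivity)
  rw [cos_two_mul, cos_arctan]
  field_simp
  rw [h]
  ring

theorem Real.two_mul_exp_div_one_add_exp_sq (s : ℝ) :
    2 * exp s / (1 + exp s ^ 2) = (cosh s)⁻¹ := by
  rw [cosh_eq, exp_neg]
  field_simp
  ring

theorem Real.one_sub_exp_sq_div_one_add_exp_sq (s : ℝ) :
    (1 - exp s ^ 2) / (1 + exp s ^ 2) = -tanh s := by
  rw [tanh_eq_sinh_div_cosh, sinh_eq, cosh_eq, exp_neg]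
  field_simp
  ring

noncomputable def sineGordonKink (s : ℝ) : ℝ := 4 * arctan (exp s)

theorem sin_sineGordonKink (s : ℝ) : sin (sineGordonKink s) = -2 * sinh s / cosh s ^ 2 := by
  rw [sineGordonKink, show 4 * arctan (exp s) = 2 * (2 * arctan (exp s)) by ring, sin_two_mul,
    sin_two_mul_arctan, cos_two_mul_arctan, two_mul_exp_div_one_add_exp_sq,
    one_sub_exp_sq_div_one_add_exp_sq, tanh_eq_sinh_div_cosh]
  field_simp

theorem hasDerivAt_sineGordonKink (s : ℝ) : HasDerivAt sineGordonKink (2 * (cosh s)⁻¹) s := by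
  refine (((hasDerivAt_exp s).arctan).const_mul 4).congr_deriv ?_
  rw [← two_mul_exp_div_one_add_exp_sq]
  ring

theorem differentiable_sineGordonKink : Differentiable ℝ sineGordonKink :=
  fun s => (hasDerivAt_sineGordonKink s).differentiableAt

theorem deriv_sineGordonKink : deriv sineGordonKink = fun s => 2 * (cosh s)⁻¹ :=
  funext fun s => (hasDerivAt_sineGordonKink s).deriv

theorem deriv_deriv_sineGordonKink :
    deriv (deriv sineGordonKink) = fun s => sin (sineGordonKink s) := by
  funext s
  rw [deriv_sineGordonKink, sin_sineGordonKink,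
    (((hasDerivAt_cosh s).fun_inv (cosh_pos s).ne').const_mul 2).deriv]
  ring

theorem deriv_deriv_const_mul_deriv_of_deriv_deriv_eq_sin {f : ℝ → ℝ} (hf : Differentiable ℝ f)
    (h : deriv (deriv f) = fun s => sin (f s)) (c s : ℝ) :
    deriv (deriv fun s => c * deriv f s) s = c * deriv f s * cos (f s) := by
  simp only [deriv_const_mul_field', h]
  rw [(hf s).hasDerivAt.sin.deriv]
  ring

/-- `u₀(x,t) = 4 arctan(exp(a x + t/a))`,
`u₁(x,t) = 2c·exp(a x + t/a)/(exp(2a x + 2t/a) + 1)` solve the `Z₂`-Sine-Gordon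
system `∂_t∂_x u₀ = sin u₀`, `∂_t∂_x u₁ = u₁ cos u₀`. -/
theorem Z2_sineGordon_explicit_solution (a : ℝ) (ha : a ≠ 0) (c : ℝ)
    (u₀ u₁ : ℝ → ℝ → ℝ)
    (hdef₀ : ∀ x t, u₀ x t = 4 * Real.arctan (Real.exp (a * x + t / a)))
    (hdef₁ : ∀ x t, u₁ x t
      = 2 * c * Real.exp (a * x + t / a) / (Real.exp (2 * a * x + 2 * t / a) + 1)) :
    (∀ x t, deriv (fun t' => deriv (fun x' => u₀ x' t') x) t = Real.sin (u₀ x t)) ∧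
    (∀ x t, deriv (fun t' => deriv (fun x' => u₁ x' t') x) t
        = u₁ x t * Real.cos (u₀ x t)) := by
  have hu₀ : u₀ = fun x t => sineGordonKink (a * x + t / a) := funext₂ hdef₀
  have hu₁ : u₁ = fun x t => c / 2 * deriv sineGordonKink (a * x + t / a) := by
    funext x t
    have hsq : exp (2 * a * x + 2 * t / a) = exp (a * x + t / a) ^ 2 := by
      rw [sq, ← exp_add]
      ring_nf
    rw [hdef₁, hsq, (hasDerivAt_sineGordonKink _).deriv, ← two_mul_exp_div_one_add_exp_sq]
    ring
  subst hu₀ hu₁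
  refine ⟨fun x t => ?_, fun x t => ?_⟩
  · rw [deriv_deriv_comp_mul_add_div _ ha, deriv_deriv_sineGordonKink]
  · rw [deriv_deriv_comp_mul_add_div (fun s => c / 2 * deriv sineGordonKink s) ha,
      deriv_deriv_const_mul_deriv_of_deriv_deriv_eq_sin differentiable_sineGordonKink
        deriv_deriv_sineGordonKink]
end

section
/- Let h₁, h₂ be real numbers and let b₀, c₀, d₀, e₀ : ℝ×ℝ → ℝ be differentiable functions satisfying the four Bäcklund relations in the x-variable: ∂_x((c₀+b₀)/2) = h₁ sin((c₀−b₀)/2), ∂_x((e₀+c₀)/2) = h₂ sin((e₀−c₀)/2), ∂_x((d₀+b₀)/2) = h₂ sin((d₀−b₀)/2), and ∂_x((e₀+d₀)/2) = h₁ sin((e₀−d₀)/2). Then at every point the algebraic relation h₁(sin((c₀−b₀)/2) + sin((e₀−d₀)/2)) = h₂(sin((e₀−c₀)/2) + sin((d₀−b₀)/2)) holds. -/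
/-! The left-hand sides of the first and fourth relations add up to those of the second and
third, because `(c₀ + b₀)/2 + (e₀ + d₀)/2 = (e₀ + c₀)/2 + (d₀ + b₀)/2` and differentiation is
additive. -/

section

variable {𝕜 : Type*} [NontriviallyNormedField 𝕜]
  {E F G : Type*} [NormedAddCommGroup E] [NormedSpace 𝕜 E]
  [NormedAddCommGroup F] [NormedSpace 𝕜 F] [NormedAddCommGroup G] [NormedSpace 𝕜 G]

theorem Differentiable.comp_prodMk_const_right {u : E → F → G}
    (hu : Differentiable 𝕜 fun p : E × F => u p.1 p.2) (t : F) :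
    Differentiable 𝕜 fun x => u x t :=
  hu.comp (differentiable_id.prodMk (differentiable_const t))

theorem deriv_add_eq_deriv_add_of_add_eq {f₁ f₂ f₃ f₄ : 𝕜 → G} {x : 𝕜}
    (h : f₁ + f₄ = f₂ + f₃) (h₁ : DifferentiableAt 𝕜 f₁ x) (h₂ : DifferentiableAt 𝕜 f₂ x)
    (h₃ : DifferentiableAt 𝕜 f₃ x) (h₄ : DifferentiableAt 𝕜 f₄ x) :
    deriv f₁ x + deriv f₄ x = deriv f₂ x + deriv f₃ x := by
  rw [← deriv_add h₁ h₄, ← deriv_add h₂ h₃]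
  exact congrArg (deriv · x) h

end

/-- the four `x`-Bäcklund relations imply the algebraic relation
`h₁(sin((c₀−b₀)/2) + sin((e₀−d₀)/2)) = h₂(sin((e₀−c₀)/2) + sin((d₀−b₀)/2))`. -/
theorem superposition_algebraic_relation (h₁ h₂ : ℝ)
    (b₀ c₀ d₀ e₀ : ℝ → ℝ → ℝ)
    (hb : Differentiable ℝ fun p : ℝ × ℝ => b₀ p.1 p.2)
    (hc : Differentiable ℝ fun p : ℝ × ℝ => c₀ p.1 p.2)
    (hd : Differentiable ℝ fun p : ℝ × ℝ => d₀ p.1 p.2)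
    (he : Differentiable ℝ fun p : ℝ × ℝ => e₀ p.1 p.2)
    (r1 : ∀ x t, deriv (fun x' => (c₀ x' t + b₀ x' t) / 2) x
        = h₁ * Real.sin ((c₀ x t - b₀ x t) / 2))
    (r2 : ∀ x t, deriv (fun x' => (e₀ x' t + c₀ x' t) / 2) x
        = h₂ * Real.sin ((e₀ x t - c₀ x t) / 2))
    (r3 : ∀ x t, deriv (fun x' => (d₀ x' t + b₀ x' t) / 2) x
        = h₂ * Real.sin ((d₀ x t - b₀ x t) / 2))
    (r4 : ∀ x t, deriv (fun x' => (e₀ x' t + d₀ x' t) / 2) x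
        = h₁ * Real.sin ((e₀ x t - d₀ x t) / 2)) :
    ∀ x t, h₁ * (Real.sin ((c₀ x t - b₀ x t) / 2) + Real.sin ((e₀ x t - d₀ x t) / 2))
        = h₂ * (Real.sin ((e₀ x t - c₀ x t) / 2) + Real.sin ((d₀ x t - b₀ x t) / 2)) := by
  intro x t
  have Db := hb.comp_prodMk_const_right t
  have Dc := hc.comp_prodMk_const_right t
  have Dd := hd.comp_prodMk_const_right t
  have De := he.comp_prodMk_const_right t
  have hsum : (fun x' => (c₀ x' t + b₀ x' t) / 2) + (fun x' => (e₀ x' t + d₀ x' t) / 2)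
      = (fun x' => (e₀ x' t + c₀ x' t) / 2) + (fun x' => (d₀ x' t + b₀ x' t) / 2) := by
    ext x'
    simp only [Pi.add_apply]
    ring
  have key := deriv_add_eq_deriv_add_of_add_eq hsum
    ((Dc.add Db).div_const 2 x) ((De.add Dc).div_const 2 x)
    ((Dd.add Db).div_const 2 x) ((De.add Dd).div_const 2 x)
  rw [r1, r4, r2, r3] at key
  linarith
end

section
/- Nonlinear superposition formula for the Sine-Gordon component. Let h₁ ≠ h₂ be real numbers and let b₀, c₀, d₀, e₀ be real numbers satisfying h₁(sin((c₀−b₀)/2) + sin((e₀−d₀)/2)) = h₂(sin((e₀−c₀)/2) + sin((d₀−b₀)/2)). If cos((c₀+d₀−b₀−e₀)/4) ≠ 0, cos((e₀−b₀)/4) ≠ 0 and cos((c₀−d₀)/4) ≠ 0, then tan((e₀−b₀)/4) = ((h₂+h₁)/(h₂−h₁)) · tan((c₀−d₀)/4). -/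
/-- nonlinear superposition formula for the Sine-Gordon component:
under the algebraic relation and nonvanishing of the relevant cosines,
`tan((e₀−b₀)/4) = ((h₂+h₁)/(h₂−h₁))·tan((c₀−d₀)/4)`. -/
theorem sineGordon_superposition_formula (h₁ h₂ b₀ c₀ d₀ e₀ : ℝ)
    (hne : h₁ ≠ h₂)
    (hrel : h₁ * (Real.sin ((c₀ - b₀) / 2) + Real.sin ((e₀ - d₀) / 2))
        = h₂ * (Real.sin ((e₀ - c₀) / 2) + Real.sin ((d₀ - b₀) / 2)))
    (hcos1 : Real.cos ((c₀ + d₀ - b₀ - e₀) / 4) ≠ 0)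
    (hcos2 : Real.cos ((e₀ - b₀) / 4) ≠ 0)
    (hcos3 : Real.cos ((c₀ - d₀) / 4) ≠ 0) :
    Real.tan ((e₀ - b₀) / 4) = ((h₂ + h₁) / (h₂ - h₁)) * Real.tan ((c₀ - d₀) / 4) := by
  have hne' : h₂ - h₁ ≠ 0 := sub_ne_zero.mpr (Ne.symm hne)
  set x := (e₀ - b₀) / 4 with hx
  set y := (c₀ - d₀) / 4 with hy
  set a := (c₀ + d₀ - b₀ - e₀) / 4 with ha
  have A1 : Real.sin ((c₀ - b₀) / 2)
      = Real.sin (x + y) * Real.cos a + Real.cos (x + y) * Real.sin a := by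
    rw [show (c₀ - b₀) / 2 = (x + y) + a by rw [hx, hy, ha]; ring, Real.sin_add]
  have A2 : Real.sin ((e₀ - d₀) / 2)
      = Real.sin (x + y) * Real.cos a - Real.cos (x + y) * Real.sin a := by
    rw [show (e₀ - d₀) / 2 = (x + y) - a by rw [hx, hy, ha]; ring, Real.sin_sub]
  have A3 : Real.sin ((e₀ - c₀) / 2)
      = Real.sin (x - y) * Real.cos a - Real.cos (x - y) * Real.sin a := by
    rw [show (e₀ - c₀) / 2 = (x - y) - a by rw [hx, hy, ha]; ring, Real.sin_sub]
  have A4 : Real.sin ((d₀ - b₀) / 2)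
      = Real.sin (x - y) * Real.cos a + Real.cos (x - y) * Real.sin a := by
    rw [show (d₀ - b₀) / 2 = (x - y) + a by rw [hx, hy, ha]; ring, Real.sin_add]
  have h2 : Real.cos a * (h₁ * Real.sin (x + y) - h₂ * Real.sin (x - y)) = 0 := by
    linear_combination (hrel - h₁ * A1 - h₁ * A2 + h₂ * A3 + h₂ * A4) / 2
  have key : h₁ * Real.sin (x + y) = h₂ * Real.sin (x - y) := by
    rcases mul_eq_zero.mp h2 with h | h
    · exact absurd h hcos1
    · linarith
  rw [Real.sin_add, Real.sin_sub] at key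
  rw [Real.tan_eq_sin_div_cos, Real.tan_eq_sin_div_cos]
  field_simp
  linear_combination -key
end

section
/- Bäcklund transformation of the scalar Sine-Gordon equation. Let a be a nonzero real number and let u, u' : ℝ×ℝ → ℝ be smooth functions satisfying ∂_x((u'+u)/2) = a sin((u'−u)/2) and ∂_t((u'−u)/2) = (1/a) sin((u'+u)/2). If u solves the Sine-Gordon equation ∂_t∂_x u = sin u, then u' also solves it: ∂_t∂_x u' = sin u'. -/
/-!
Write `p = (u' + u)/2` and `q = (u' - u)/2`. The first Bäcklund equation gives
`∂ₓu' = 2a sin q - ∂ₓu`; differentiating in `t` and using the second one and the equation for `u`,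
`∂ₜ∂ₓu' = 2 sin p cos q - sin u`, which is `sin u'` by the sum-to-product formula.
-/

open Real

section PartialDerivatives

variable {E : Type*} [NormedAddCommGroup E] [NormedSpace ℝ E] {f : ℝ → ℝ → E}

theorem differentiableAt_left_of_differentiable
    (hf : Differentiable ℝ fun p : ℝ × ℝ => f p.1 p.2) (x t : ℝ) :
    DifferentiableAt ℝ (fun x' => f x' t) x :=
  (hf (x, t)).comp (f := fun x' : ℝ => (x', t)) x
    (differentiableAt_id.prodMk (differentiableAt_const t))

theorem differentiableAt_right_of_differentiable
    (hf : Differentiable ℝ fun p : ℝ × ℝ => f p.1 p.2) (x t : ℝ) :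
    DifferentiableAt ℝ (fun t' => f x t') t :=
  (hf (x, t)).comp (f := fun t' : ℝ => (x, t')) t
    ((differentiableAt_const x).prodMk differentiableAt_id)

theorem differentiable_deriv_left_of_contDiff
    (hf : ContDiff ℝ 2 fun p : ℝ × ℝ => f p.1 p.2) (x : ℝ) :
    Differentiable ℝ fun t => deriv (fun x' => f x' t) x := by
  have hfderiv : ContDiff ℝ 1 fun t => fderiv ℝ (fun x' => f x' t) x :=
    ContDiff.fderiv (f := fun t x' => f x' t) (m := 2)
      (hf.comp (contDiff_snd.prodMk contDiff_fst)) contDiff_const (by norm_num)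
  exact (hfderiv.clm_apply contDiff_const).differentiable one_ne_zero

end PartialDerivatives

/-- Bäcklund transformation of the scalar Sine-Gordon equation. -/
theorem sineGordon_backlund (a : ℝ) (ha : a ≠ 0)
    (u u' : ℝ → ℝ → ℝ)
    (hu : ContDiff ℝ (⊤ : ℕ∞) fun p : ℝ × ℝ => u p.1 p.2)
    (hu' : ContDiff ℝ (⊤ : ℕ∞) fun p : ℝ × ℝ => u' p.1 p.2)
    (hbx : ∀ x t, deriv (fun x' => (u' x' t + u x' t) / 2) x
        = a * Real.sin ((u' x t - u x t) / 2))
    (hbt : ∀ x t, deriv (fun t' => (u' x t' - u x t') / 2) t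
        = (1 / a) * Real.sin ((u' x t + u x t) / 2))
    (hsg : ∀ x t, deriv (fun t' => deriv (fun x' => u x' t') x) t = Real.sin (u x t)) :
    ∀ x t, deriv (fun t' => deriv (fun x' => u' x' t') x) t = Real.sin (u' x t) := by
  intro x t
  have hu2 : ContDiff ℝ 2 fun p : ℝ × ℝ => u p.1 p.2 := hu.of_le (WithTop.coe_le_coe.2 le_top)
  have hu1 : Differentiable ℝ fun p : ℝ × ℝ => u p.1 p.2 := hu2.differentiable two_ne_zero
  have hu'1 : Differentiable ℝ fun p : ℝ × ℝ => u' p.1 p.2 := hu'.differentiable (by simp)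
  have hux' : (fun t' => deriv (fun x' => u' x' t') x) =
      fun t' => 2 * a * sin ((u' x t' - u x t') / 2) - deriv (fun x' => u x' t') x := by
    funext t'
    have h := hbx x t'
    rw [deriv_div_const, deriv_fun_add (differentiableAt_left_of_differentiable hu'1 x t')
      (differentiableAt_left_of_differentiable hu1 x t')] at h
    linarith
  have hq : HasDerivAt (fun t' => (u' x t' - u x t') / 2) (1 / a * sin ((u' x t + u x t) / 2)) t :=
    hbt x t ▸ (((differentiableAt_right_of_differentiable hu'1 x t).sub
      (differentiableAt_right_of_differentiable hu1 x t)).div_const 2).hasDerivAt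
  have hux : HasDerivAt (fun t' => deriv (fun x' => u x' t') x) (sin (u x t)) t :=
    hsg x t ▸ (differentiable_deriv_left_of_contDiff hu2 x t).hasDerivAt
  rw [hux', ((hq.sin.const_mul (2 * a)).fun_sub hux).deriv]
  linear_combination (2 * cos ((u' x t - u x t) / 2) * sin ((u' x t + u x t) / 2)) *
    mul_one_div_cancel ha - sin_add_sin (u' x t) (u x t)
end

section
/- Zero curvature (Lax) formulation of the Sine-Gordon equation. Let u : ℝ×ℝ → ℝ be smooth and let λ be a nonzero complex number. Define the 2×2 complex matrix functions M = [[−iλ, −u_x/2], [u_x/2, iλ]] and N = (i/(4λ)) · [[cos u, sin u], [sin u, −cos u]], where u_x = ∂_x u. Then the zero curvature equation ∂_t M − ∂_x N + MN − NM = 0 holds at a point if and only if ∂_t∂_x u = sin u holds at that point. -/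
/-!
With `σ₃ = !![1, 0; 0, -1]`, `σ₁ = !![0, 1; 1, 0]` and `J = !![0, -1; 1, 0]` we have
`M = -iλ σ₃ + (u_x / 2) J` and `N = (i / 4λ) (cos u σ₃ + sin u σ₁)`. From
`[J, σ₃] = 2σ₁`, `[J, σ₁] = -2σ₃` and `[σ₃, σ₁] = -2J`, the part `(u_x / 2) [J, N]` of
`[M, N]` cancels `∂_x N` exactly, while `-iλ [σ₃, N] = -(sin u / 2) J` (the spectral parameter
drops out). Since `∂_t M = (u_xt / 2) J`, the curvature is `((u_xt - sin u) / 2) J`.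
-/

open Complex

section PartialDerivatives

variable {F : Type*} [NormedAddCommGroup F] [NormedSpace ℝ F] {u : ℝ → ℝ → F}

lemma hasDerivAt_partial_fst (hu : ContDiff ℝ 1 fun p : ℝ × ℝ => u p.1 p.2) (x t : ℝ) :
    HasDerivAt (fun x' => u x' t) (fderiv ℝ (fun p : ℝ × ℝ => u p.1 p.2) (x, t) (1, 0)) x :=
  ((hu.differentiable one_ne_zero) (x, t)).hasFDerivAt.comp_hasDerivAt
    (f := fun x' => (x', t)) x ((hasDerivAt_id x).prodMk (hasDerivAt_const x t))

lemma differentiableAt_deriv_partial_fst (hu : ContDiff ℝ 2 fun p : ℝ × ℝ => u p.1 p.2)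
    (x t : ℝ) : DifferentiableAt ℝ (fun t' => deriv (fun x' => u x' t') x) t := by
  simp only [(hasDerivAt_partial_fst (hu.of_le one_le_two) x _).deriv]
  have : ContDiff ℝ 1 fun p : ℝ × ℝ => fderiv ℝ (fun p : ℝ × ℝ => u p.1 p.2) p (1, 0) :=
    (hu.fderiv_right le_rfl).clm_apply contDiff_const
  exact ((this.differentiable one_ne_zero) (x, t)).comp t
    ((differentiableAt_const x).prodMk differentiableAt_id)

end PartialDerivatives

lemma deriv_ofReal_comp {f : ℝ → ℝ} {x : ℝ} (hf : DifferentiableAt ℝ f x) :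
    deriv (fun y => (f y : ℂ)) x = deriv f x :=
  hf.hasDerivAt.ofReal_comp.deriv

lemma of_deriv_apply_smul {m n : Type*} {A B : ℝ → Matrix m n ℂ} (k : ℂ)
    (hA : ∀ s, A s = k • B s) (t : ℝ) :
    (Matrix.of fun i j => deriv (fun s => A s i j) t)
      = k • Matrix.of fun i j => deriv (fun s => B s i j) t := by
  ext i j
  simp [hA, deriv_const_mul_field']

lemma of_deriv_apply_fin_two {A : ℝ → Matrix (Fin 2) (Fin 2) ℂ} {a b c d : ℝ → ℂ}
    (hA : ∀ s, A s = !![a s, b s; c s, d s]) (t : ℝ) :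
    (Matrix.of fun i j => deriv (fun s => A s i j) t)
      = !![deriv a t, deriv b t; deriv c t, deriv d t] := by
  ext i j
  fin_cases i <;> fin_cases j <;> simp [hA]

lemma of_deriv_reflection_apply {f : ℝ → ℝ} {x : ℝ} (hf : DifferentiableAt ℝ f x) :
    (Matrix.of fun i j => deriv (fun y => !![(Real.cos (f y) : ℂ), Real.sin (f y);
        Real.sin (f y), -(Real.cos (f y) : ℂ)] i j) x)
      = ((deriv f x : ℝ) : ℂ) •
          !![-(Real.sin (f x) : ℂ), Real.cos (f x); Real.cos (f x), Real.sin (f x)] := by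
  rw [of_deriv_apply_fin_two (fun _ => rfl)]
  have hcos := hf.hasDerivAt.cos.ofReal_comp.deriv
  have hsin := hf.hasDerivAt.sin.ofReal_comp.deriv
  ext i j
  fin_cases i <;> fin_cases j <;>
    simp [-ofReal_cos, -ofReal_sin, hcos, hsin, deriv.fun_neg] <;> ring

lemma sineGordon_curvature_eq_smul {lam : ℂ} (hlam : lam ≠ 0) (w wt C S : ℂ) :
    !![0, -wt / 2; wt / 2, 0] - (I / (4 * lam)) • w • !![-S, C; C, S]
      + !![-(I * lam), -w / 2; w / 2, I * lam] * ((I / (4 * lam)) • !![C, S; S, -C])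
      - ((I / (4 * lam)) • !![C, S; S, -C]) * !![-(I * lam), -w / 2; w / 2, I * lam]
      = ((wt - S) / 2) • !![0, -1; 1, 0] := by
  have hIlam : I / (4 * lam) * (I * lam) = -1 / 4 := by
    field_simp; rw [I_sq]
  ext i j
  fin_cases i <;> fin_cases j <;> simp
  · ring
  · linear_combination (-2 * S) * hIlam
  · linear_combination (2 * S) * hIlam
  · ring

/-- zero curvature (Lax) formulation of the Sine-Gordon equation.
With `M = [[−iλ, −u_x/2],[u_x/2, iλ]]` and
`N = (i/(4λ))·[[cos u, sin u],[sin u, −cos u]]`, the zero curvature equation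
`∂_t M − ∂_x N + MN − NM = 0` at a point is equivalent to `∂_t∂_x u = sin u` there. -/
theorem sineGordon_zero_curvature (u : ℝ → ℝ → ℝ)
    (hu : ContDiff ℝ (⊤ : ℕ∞) fun p : ℝ × ℝ => u p.1 p.2)
    (lam : ℂ) (hlam : lam ≠ 0)
    (M N : ℝ → ℝ → Matrix (Fin 2) (Fin 2) ℂ)
    (hM : ∀ x t, M x t =
      !![-(Complex.I * lam), -((deriv (fun x' => u x' t) x : ℝ) : ℂ) / 2;
         ((deriv (fun x' => u x' t) x : ℝ) : ℂ) / 2, Complex.I * lam])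
    (hN : ∀ x t, N x t = (Complex.I / (4 * lam)) •
      !![((Real.cos (u x t) : ℝ) : ℂ), ((Real.sin (u x t) : ℝ) : ℂ);
         ((Real.sin (u x t) : ℝ) : ℂ), -((Real.cos (u x t) : ℝ) : ℂ)])
    (x t : ℝ) :
    ((Matrix.of fun i j => deriv (fun t' => M x t' i j) t)
        - (Matrix.of fun i j => deriv (fun x' => N x' t i j) x)
        + M x t * N x t - N x t * M x t = 0)
      ↔ deriv (fun t' => deriv (fun x' => u x' t') x) t = Real.sin (u x t) := by
  have hu2 : ContDiff ℝ 2 fun p : ℝ × ℝ => u p.1 p.2 :=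
    hu.of_le (WithTop.coe_le_coe.mpr le_top)
  have hJ : !![0, -1; 1, 0] ≠ (0 : Matrix (Fin 2) (Fin 2) ℂ) := fun h => by
    simpa using congrFun (congrFun h 1) 0
  have hux := (hasDerivAt_partial_fst (hu2.of_le one_le_two) x t).differentiableAt
  have hMt : (Matrix.of fun i j => deriv (fun t' => M x t' i j) t)
      = !![0, -((deriv (fun t' => deriv (fun x' => u x' t') x) t : ℝ) : ℂ) / 2;
          ((deriv (fun t' => deriv (fun x' => u x' t') x) t : ℝ) : ℂ) / 2, 0] := by
    rw [of_deriv_apply_fin_two (hM x)]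
    simp [deriv_div_const, deriv.fun_neg,
      deriv_ofReal_comp (differentiableAt_deriv_partial_fst hu2 x t)]
  rw [hMt, of_deriv_apply_smul _ (fun x' => hN x' t), of_deriv_reflection_apply hux, hM, hN,
    sineGordon_curvature_eq_smul hlam, smul_eq_zero, or_iff_left hJ, div_eq_zero_iff,
    or_iff_left two_ne_zero, sub_eq_zero, ofReal_inj]
end
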